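/- arXiv:2109.05605 — 5 statements merged into one kernel-verified Lean document; each statement's English description precedes it below -/
import Mathlib

section
/- (Pólya's inequality for quadratics) Let Q(x) = x² + ax + b be a monic real quadratic polynomial and let ε > 0. Then the Lebesgue measure of the set {x ∈ ℝ : |Q(x)| ≤ ε} is at most 4·sqrt(ε/2) = 2·sqrt(2ε). -/
open MeasureTheory

theorem stmt_11 (a b ε : ℝ) (hε : 0 < ε) :
    volume {x : ℝ | |x ^ 2 + a * x + b| ≤ ε} ≤ ENNReal.ofReal (2 * Real.sqrt (2 * ε)) := by
  set c : ℝ := b - (a/2)^2 with hc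
  set l : ℝ := Real.sqrt (-ε - c) with hl
  set u : ℝ := Real.sqrt (ε - c) with hu
  have hl0 : 0 ≤ l := Real.sqrt_nonneg _
  have hu0 : 0 ≤ u := Real.sqrt_nonneg _
  have hlsq : -ε - c ≤ l^2 := by
    rcases le_or_gt 0 (-ε - c) with h | h
    · rw [hl, Real.sq_sqrt h]
    · nlinarith
  have hule : u ≤ l + Real.sqrt (2*ε) := by
    have hs : Real.sqrt (2*ε) ^ 2 = 2*ε := Real.sq_sqrt (by linarith)
    have h2 : ε - c ≤ (l + Real.sqrt (2*ε))^2 := by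
      nlinarith [Real.sqrt_nonneg (2*ε)]
    calc u ≤ Real.sqrt ((l + Real.sqrt (2*ε))^2) := Real.sqrt_le_sqrt h2
      _ = l + Real.sqrt (2*ε) := Real.sqrt_sq (by positivity)
  have hkey : u - l ≤ Real.sqrt (2*ε) := by linarith
  have hsub : {x : ℝ | |x ^ 2 + a * x + b| ≤ ε}
      ⊆ (Set.Icc (-u - a/2) (-l - a/2)) ∪ (Set.Icc (l - a/2) (u - a/2)) := by
    intro x hx
    simp only [Set.mem_setOf_eq, abs_le] at hx
    set y := x + a/2 with hy'
    have h1 : y^2 ≤ ε - c := by show (x + a/2)^2 ≤ ε - (b - (a/2)^2); nlinarith [hx.2]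
    have h2 : -ε - c ≤ y^2 := by show -ε - (b - (a/2)^2) ≤ (x + a/2)^2; nlinarith [hx.1]
    have hyu : |y| ≤ u := by
      rw [hu, ← Real.sqrt_sq_eq_abs]
      exact Real.sqrt_le_sqrt h1
    have hyl : l ≤ |y| := by
      rw [hl, ← Real.sqrt_sq_eq_abs]
      exact Real.sqrt_le_sqrt h2
    rcases le_or_gt 0 y with h | h
    · right
      rw [abs_of_nonneg h] at hyu hyl
      constructor
      · simp only [hy'] at hyl; linarith
      · simp only [hy'] at hyu; linarith
    · left
      rw [abs_of_neg h] at hyu hyl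
      constructor
      · simp only [hy'] at hyu; linarith
      · simp only [hy'] at hyl; linarith
  calc volume {x : ℝ | |x ^ 2 + a * x + b| ≤ ε}
      ≤ volume ((Set.Icc (-u - a/2) (-l - a/2)) ∪ (Set.Icc (l - a/2) (u - a/2))) :=
        measure_mono hsub
    _ ≤ volume (Set.Icc (-u - a/2) (-l - a/2)) + volume (Set.Icc (l - a/2) (u - a/2)) :=
        measure_union_le _ _
    _ = ENNReal.ofReal (u - l) + ENNReal.ofReal (u - l) := by
        rw [Real.volume_Icc, Real.volume_Icc]
        congr 1 <;> ring_nf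
    _ ≤ ENNReal.ofReal (Real.sqrt (2*ε)) + ENNReal.ofReal (Real.sqrt (2*ε)) := by
        gcongr
    _ = ENNReal.ofReal (2 * Real.sqrt (2*ε)) := by
        rw [← ENNReal.ofReal_add (Real.sqrt_nonneg _) (Real.sqrt_nonneg _)]
        ring_nf
end

section
/- Fix positive reals μ, r, β_0 < β_n and ω_n ≥ 0, and define G(x) = 1 + r/(β_0 x + μ) − β_n/(β_n x + μ + ω_n) − ω_n β_0/((β_0 x + μ)(β_n x + μ + ω_n)). If (ω_n+μ)(μ+r) < β_0 ω_n + β_n μ, then G(0) < 0 and G(1) > 0, so G has a root in (0,1); moreover this root is unique in [0,1] (the quadratic numerator of G has exactly one root in [0,1], the other root being strictly negative). -/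
/-!
Clearing the two denominators, which are positive on `[0, ∞)`, turns `G x = 0` into a quadratic
equation `N x = 0` with leading coefficient `β₀ βn > 0` and constant term `N 0`, a positive multiple
of `G 0`. The hypothesis says exactly `N 0 < 0`, while `N 1 > 0` holds outright, so the
intermediate value theorem gives a root in `(0, 1)`. Since the product of the two roots is
`N 0 / (β₀ βn) < 0`, at most one of them is nonnegative.
-/

theorem eq_of_quadratic_eq_zero_of_nonneg {a b c x y : ℝ} (ha : 0 ≤ a) (hc : c < 0)
    (hx : 0 ≤ x) (hy : 0 ≤ y) (hfx : a * x ^ 2 + b * x + c = 0)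
    (hfy : a * y ^ 2 + b * y + c = 0) : x = y := by
  have hprod : (x - y) * (a * (x + y) + b) = 0 := by linear_combination hfx - hfy
  rcases mul_eq_zero.mp hprod with h | h
  · exact sub_eq_zero.mp h
  · have hc' : c = a * (x * y) := by linear_combination hfx - x * h
    nlinarith [mul_nonneg ha (mul_nonneg hx hy)]

section Balance

variable (μ r β₀ βn ωn : ℝ)

/-- The numerator of `G` over the common denominator `(β₀ x + μ) (βn x + μ + ωn)`. -/
def balanceNumerator (x : ℝ) : ℝ :=
  β₀ * βn * x ^ 2 + (β₀ * (μ + ωn) + βn * (μ + r - β₀)) * x +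
    ((μ + r) * (μ + ωn) - βn * μ - ωn * β₀)

theorem continuous_balanceNumerator : Continuous (balanceNumerator μ r β₀ βn ωn) := by
  unfold balanceNumerator; fun_prop

theorem balance_eq_balanceNumerator_div {x : ℝ} (h₀ : β₀ * x + μ ≠ 0)
    (hn : βn * x + μ + ωn ≠ 0) :
    1 + r / (β₀ * x + μ) - βn / (βn * x + μ + ωn) -
        ωn * β₀ / ((β₀ * x + μ) * (βn * x + μ + ωn)) =
      balanceNumerator μ r β₀ βn ωn x / ((β₀ * x + μ) * (βn * x + μ + ωn)) := by
  have common_denom (a b : ℝ) (ha : a ≠ 0) (hb : b ≠ 0) :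
      1 + r / a - βn / b - ωn * β₀ / (a * b) = (a * b + r * b - βn * a - ωn * β₀) / (a * b) := by
    field_simp
  rw [common_denom _ _ h₀ hn]
  unfold balanceNumerator
  ring

theorem balanceNumerator_one :
    balanceNumerator μ r β₀ βn ωn 1 = μ * (β₀ + μ + ωn) + r * (βn + μ + ωn) := by
  unfold balanceNumerator; ring

variable {μ r β₀ βn ωn}

theorem balanceNumerator_zero_neg (hyp : (ωn + μ) * (μ + r) < β₀ * ωn + βn * μ) :
    balanceNumerator μ r β₀ βn ωn 0 < 0 := by
  unfold balanceNumerator; linarith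

theorem balanceNumerator_one_pos (hμ : 0 < μ) (hr : 0 < r) (hβ₀ : 0 < β₀) (hβn : 0 < βn)
    (hωn : 0 ≤ ωn) : 0 < balanceNumerator μ r β₀ βn ωn 1 := by
  rw [balanceNumerator_one]; positivity

theorem balanceDenominators_pos (hμ : 0 < μ) (hβ₀ : 0 ≤ β₀) (hβn : 0 ≤ βn) (hωn : 0 ≤ ωn)
    {x : ℝ} (hx : 0 ≤ x) : 0 < β₀ * x + μ ∧ 0 < βn * x + μ + ωn := by
  have := mul_nonneg hβ₀ hx
  have := mul_nonneg hβn hx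
  constructor <;> linarith

theorem eq_of_balanceNumerator_eq_zero (hβ₀ : 0 ≤ β₀) (hβn : 0 ≤ βn)
    (hyp : (ωn + μ) * (μ + r) < β₀ * ωn + βn * μ) {x y : ℝ} (hx : 0 ≤ x) (hy : 0 ≤ y)
    (hNx : balanceNumerator μ r β₀ βn ωn x = 0) (hNy : balanceNumerator μ r β₀ βn ωn y = 0) :
    x = y :=
  eq_of_quadratic_eq_zero_of_nonneg (mul_nonneg hβ₀ hβn)
    (by simpa [balanceNumerator] using balanceNumerator_zero_neg hyp) hx hy hNx hNy

end Balance

theorem stmt_14_general (μ r β₀ βn ωn : ℝ)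
    (hμ : 0 < μ) (hr : 0 < r) (hβ₀ : 0 < β₀) (hβn : 0 < βn)
    (hωn : 0 ≤ ωn)
    (G : ℝ → ℝ)
    (hG : ∀ x, G x = 1 + r / (β₀ * x + μ) - βn / (βn * x + μ + ωn) -
      ωn * β₀ / ((β₀ * x + μ) * (βn * x + μ + ωn)))
    (hyp : (ωn + μ) * (μ + r) < β₀ * ωn + βn * μ) :
    G 0 < 0 ∧ 0 < G 1 ∧ (∃ x ∈ Set.Ioo (0 : ℝ) 1, G x = 0) ∧
      ∃! x, x ∈ Set.Icc (0 : ℝ) 1 ∧ G x = 0 := by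
  set N := balanceNumerator μ r β₀ βn ωn
  have hD {x : ℝ} (hx : 0 ≤ x) : 0 < (β₀ * x + μ) * (βn * x + μ + ωn) :=
    have ⟨h₀, hn⟩ := balanceDenominators_pos hμ hβ₀.le hβn.le hωn hx
    mul_pos h₀ hn
  have hGN {x : ℝ} (hx : 0 ≤ x) : G x = N x / ((β₀ * x + μ) * (βn * x + μ + ωn)) := by
    have ⟨h₀, hn⟩ := balanceDenominators_pos hμ hβ₀.le hβn.le hωn hx
    rw [hG, balance_eq_balanceNumerator_div μ r β₀ βn ωn h₀.ne' hn.ne']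
  have hG_eq_zero {x : ℝ} (hx : 0 ≤ x) : G x = 0 ↔ N x = 0 := by
    rw [hGN hx, div_eq_zero_iff, or_iff_left (hD hx).ne']
  have hN0 : N 0 < 0 := balanceNumerator_zero_neg hyp
  have hN1 : 0 < N 1 := balanceNumerator_one_pos hμ hr hβ₀ hβn hωn
  obtain ⟨x₀, hx₀, hNx₀⟩ := intermediate_value_Ioo zero_le_one
    (continuous_balanceNumerator μ r β₀ βn ωn).continuousOn ⟨hN0, hN1⟩
  have hGx₀ : G x₀ = 0 := (hG_eq_zero hx₀.1.le).mpr hNx₀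
  refine ⟨?_, ?_, ⟨x₀, hx₀, hGx₀⟩, x₀, ⟨Set.Ioo_subset_Icc_self hx₀, hGx₀⟩, ?_⟩
  · rw [hGN le_rfl]
    exact div_neg_of_neg_of_pos hN0 (hD le_rfl)
  · rw [hGN zero_le_one]
    exact div_pos hN1 (hD zero_le_one)
  · rintro y ⟨hy, hGy⟩
    exact eq_of_balanceNumerator_eq_zero hβ₀.le hβn.le hyp hy.1 hx₀.1.le
      ((hG_eq_zero hy.1).mp hGy) hNx₀

theorem stmt_14 (μ r β₀ βn ωn : ℝ)
    (hμ : 0 < μ) (hr : 0 < r) (hβ₀ : 0 < β₀) (hβn : 0 < βn)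
    (hlt : β₀ < βn) (hωn : 0 ≤ ωn)
    (G : ℝ → ℝ)
    (hG : ∀ x, G x = 1 + r / (β₀ * x + μ) - βn / (βn * x + μ + ωn) -
      ωn * β₀ / ((β₀ * x + μ) * (βn * x + μ + ωn)))
    (hyp : (ωn + μ) * (μ + r) < β₀ * ωn + βn * μ) :
    G 0 < 0 ∧ 0 < G 1 ∧ (∃ x ∈ Set.Ioo (0 : ℝ) 1, G x = 0) ∧
      ∃! x, x ∈ Set.Icc (0 : ℝ) 1 ∧ G x = 0 :=
  stmt_14_general μ r β₀ βn ωn hμ hr hβ₀ hβn hωn G hG hyp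
end

section
/- Fix positive reals μ, r, β_0, β_n, I* ∈ (0,1], S_0*, S_n* ≥ 0, and ω_n ≥ 0, with β_0 < β_n and β_0 S_0* + β_n S_n* = r + μ. Define a = ω_n + μ + β_0 I* + β_n I* and b = β_0 I* ω_n + (μ + β_n I*)(β_0 I* + β_n S_n*) − (μ + β_0 I*)β_n S_n*. Then a > 0 and b > 0, and consequently both roots of z² + az + b have negative real parts. -/
theorem stmt_15 (μ r β₀ βn I S₀ Sn ωn : ℝ)
    (hμ : 0 < μ) (hr : 0 < r) (hβ₀ : 0 < β₀) (hβn : 0 < βn)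
    (hI : I ∈ Set.Ioc (0 : ℝ) 1) (hS₀ : 0 ≤ S₀) (hSn : 0 ≤ Sn) (hωn : 0 ≤ ωn)
    (hlt : β₀ < βn) (hbal : β₀ * S₀ + βn * Sn = r + μ)
    (a b : ℝ)
    (ha : a = ωn + μ + β₀ * I + βn * I)
    (hb : b = β₀ * I * ωn + (μ + βn * I) * (β₀ * I + βn * Sn) - (μ + β₀ * I) * (βn * Sn)) :
    0 < a ∧ 0 < b ∧
      ∀ z : ℂ, z ^ 2 + (a : ℂ) * z + (b : ℂ) = 0 → z.re < 0 := by
  obtain ⟨hI0, hI1⟩ := hI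
  have hapos : 0 < a := by nlinarith [mul_pos hβ₀ hI0, mul_pos hβn hI0]
  have hbpos : 0 < b := by
    nlinarith [mul_pos hβ₀ hI0, mul_pos hβn hI0, mul_pos (mul_pos hβ₀ hI0) hμ,
      mul_nonneg (mul_nonneg (sub_pos.mpr hlt).le hI0.le) (mul_nonneg hβn.le hSn),
      mul_nonneg (mul_nonneg hβ₀.le hI0.le) hωn]
  refine ⟨hapos, hbpos, ?_⟩
  intro z hz
  set x := z.re
  set y := z.im
  have hre : x ^ 2 - y ^ 2 + a * x + b = 0 := by
    have := congrArg Complex.re hz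
    simpa [Complex.add_re, Complex.mul_re, pow_two, x, y] using this
  have him : 2 * x * y + a * y = 0 := by
    have := congrArg Complex.im hz
    have h := this
    simp [Complex.add_im, Complex.mul_im, pow_two, x, y] at h
    linarith
  by_contra hx
  push_neg at hx
  rcases eq_or_ne y 0 with hy | hy
  · rw [hy] at hre
    nlinarith
  · have : y * (2 * x + a) = 0 := by linarith [him]
    have h2 : 2 * x + a = 0 := by
      rcases mul_eq_zero.mp this with h | h
      · exact absurd h hy
      · exact h
    nlinarith
end

section
/- Let J be the (n+1)×(n+1) lower bidiagonal matrix (indexed from 0) with J_{ii} = −δ−μ for 0 ≤ i ≤ n−1, J_{nn} = −μ, and J_{i+1,i} = δ for 0 ≤ i ≤ n−1, where δ, μ > 0, and let P be the matrix whose last row is all ones and all other rows zero. Then for every κ < δ, e^{κt}·‖e^{μt}·exp(tJ) − P‖ → 0 as t → ∞. Consequently, for any initial vector S₀ with nonnegative entries summing to 1, the solution S(t) of S' = J S + μ e_n converges to e_n (the last standard basis vector), and for every κ < μ, e^{κt}‖S(t) − e_n‖ → 0. -/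
/-!
Write `J = -(δ + μ) • 1 + δ • P + N` with `P = e_n 𝟙ᵀ` and `N` strictly lower triangular. Since
`J e_n = -μ e_n` and `𝟙ᵀ J = -μ 𝟙ᵀ`, `P` is an idempotent with `P N = N P = 0`, so the three
summands commute. With `exp (s • P) = 1 + (eˢ - 1) • P` and `P exp (t • N) = P` this gives
`e^{μt} exp (t • J) - P = e^{-δt} (exp (t • N) - P)`, and `exp (t • N)` is a polynomial in `t`
because `N` is nilpotent. As `e_n` is an equilibrium of `S' = J S + μ e_n`, the solution is
`S t = e_n + exp (t • J) (S 0 - e_n)`, and `‖exp (t • J)‖ = e^{-μt} (‖P‖ + o(1))`.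
-/

open Filter

/-- The operator (spectral) norm of a real matrix, viewed as a linear map
between Euclidean spaces. -/
noncomputable def matOpNorm {m n : ℕ} (M : Matrix (Fin m) (Fin n) ℝ) : ℝ :=
  ‖LinearMap.toContinuousLinearMap (Matrix.toEuclideanLin M)‖

/-- The Euclidean norm of a vector in `Fin m → ℝ`. -/
noncomputable def vecNorm {m : ℕ} (v : Fin m → ℝ) : ℝ :=
  Real.sqrt (∑ i, v i ^ 2)

open Asymptotics Topology NormedSpace
open scoped Nat

section BanachAlgebra

variable {𝔸 : Type*} [NormedRing 𝔸] [NormedAlgebra ℝ 𝔸]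

theorem NormedSpace.exp_eq_sum_of_pow_eq_zero {x : 𝔸} {m : ℕ} (h : x ^ m = 0) :
    exp x = ∑ k ∈ Finset.range m, (k !⁻¹ : ℝ) • x ^ k := by
  rw [exp_eq_tsum ℝ]
  refine tsum_eq_sum fun k hk => ?_
  rw [pow_eq_zero_of_le (by simpa using hk) h, smul_zero]

theorem isLittleO_exp_smul_of_isNilpotent {N : 𝔸} (hN : IsNilpotent N) {b : ℝ} (hb : 0 < b) :
    (fun t : ℝ => exp (t • N)) =o[atTop] fun t => Real.exp (b * t) := by
  obtain ⟨m, hm⟩ := hN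
  have hexp : (fun t : ℝ => exp (t • N)) =
      ∑ k ∈ Finset.range m, fun t : ℝ => t ^ k • ((k !⁻¹ : ℝ) • N ^ k) := by
    ext t
    rw [exp_eq_sum_of_pow_eq_zero (by rw [smul_pow, hm, smul_zero]), Finset.sum_apply]
    exact Finset.sum_congr rfl fun k _ => by rw [smul_pow, smul_comm]
  rw [hexp]
  refine IsLittleO.sum fun k _ => ?_
  exact (isLittleO_pow_exp_pos_mul_atTop k hb).smul_isBigO (isBigO_const_const _ one_ne_zero _)
    |>.congr_right fun t => by rw [smul_eq_mul, mul_one]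

variable [CompleteSpace 𝔸]

theorem mul_exp_eq_of_mul_eq_zero {p x : 𝔸} (h : p * x = 0) : p * exp x = p := by
  have hterm : ∀ k ≠ 0, p * ((k !⁻¹ : ℝ) • x ^ k) = 0 := fun k hk => by
    rw [mul_smul_comm, ← Nat.succ_pred_eq_of_ne_zero hk, pow_succ', ← mul_assoc, h, zero_mul,
      smul_zero]
  refine ((exp_series_hasSum_exp' (𝕂 := ℝ) x).mul_left p).unique ?_
  simpa using hasSum_single 0 hterm

theorem exp_smul_of_isIdempotentElem {p : 𝔸} (hp : IsIdempotentElem p) (c : ℝ) :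
    exp (c • p) = 1 + (Real.exp c - 1) • p := by
  have hreal : HasSum (fun k : ℕ => ((k ! : ℝ)⁻¹ * c ^ k) • p) (Real.exp c • p) := by
    simpa [Real.exp_eq_exp_ℝ] using (exp_series_hasSum_exp' (𝕂 := ℝ) c).smul_const p
  have hterm (k : ℕ) :
      ((k + 1)! : ℝ)⁻¹ • (c • p) ^ (k + 1) = (((k + 1)! : ℝ)⁻¹ * c ^ (k + 1)) • p := by
    rw [smul_pow, hp.pow_succ_eq, smul_smul]
  have htail := (hasSum_nat_add_iff' 1).2 (exp_series_hasSum_exp' (𝕂 := ℝ) (c • p))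
  have h := ((hasSum_nat_add_iff' 1).2 hreal).unique (by simpa only [hterm] using htail)
  simp only [Finset.range_one, Finset.sum_singleton, Nat.factorial_zero, Nat.cast_one, inv_one,
    pow_zero, mul_one, one_smul] at h
  rw [sub_smul, one_smul, h, add_sub_cancel]

theorem exp_smul_sub_eq_of_isIdempotentElem {p N : 𝔸} (hp : IsIdempotentElem p)
    (hpN : p * N = 0) (hNp : N * p = 0) (δ μ t : ℝ) :
    Real.exp (μ * t) • exp (t • ((-δ - μ) • (1 : 𝔸) + δ • p + N)) - p =
      Real.exp (-(δ * t)) • (exp (t • N) - p) := by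
  let +nondep : NormedAlgebra ℚ 𝔸 := .restrictScalars ℚ ℝ 𝔸
  have hsplit : t • ((-δ - μ) • (1 : 𝔸) + δ • p + N) =
      algebraMap ℝ 𝔸 ((-δ - μ) * t) + ((δ * t) • p + t • N) := by
    rw [Algebra.algebraMap_eq_smul_one]
    module
  have hcomm : Commute ((δ * t) • p) (t • N) :=
    (Commute.smul_right (hpN.trans hNp.symm) t).smul_left (δ * t)
  rw [hsplit, exp_add_of_commute (Algebra.commutes _ _), exp_add_of_commute hcomm,
    ← algebraMap_exp_comm, ← Real.exp_eq_exp_ℝ, ← Algebra.smul_def,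
    exp_smul_of_isIdempotentElem hp, add_mul, one_mul, smul_mul_assoc,
    mul_exp_eq_of_mul_eq_zero (by rw [mul_smul_comm, hpN, smul_zero]), smul_smul,
    ← Real.exp_add, show μ * t + (-δ - μ) * t = -(δ * t) by ring, smul_add, smul_smul, mul_sub,
    ← Real.exp_add, neg_add_cancel, Real.exp_zero, mul_one]
  module

theorem tendsto_exp_mul_norm_exp_smul_sub {p N : 𝔸} (hp : IsIdempotentElem p) (hpN : p * N = 0)
    (hNp : N * p = 0) (hN : IsNilpotent N) {δ μ κ : ℝ} (hκ : κ < δ) :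
    Tendsto (fun t : ℝ => Real.exp (κ * t) *
      ‖Real.exp (μ * t) • exp (t • ((-δ - μ) • (1 : 𝔸) + δ • p + N)) - p‖) atTop (𝓝 0) := by
  have hb : 0 < δ - κ := sub_pos.2 hκ
  have hconst : (fun _ : ℝ => p) =o[atTop] fun t => Real.exp ((δ - κ) * t) :=
    isLittleO_const_left.2 <| .inr <| tendsto_norm_atTop_atTop.comp <|
      Real.tendsto_exp_atTop.comp (tendsto_id.const_mul_atTop hb)
  refine ((isLittleO_exp_smul_of_isNilpotent hN hb).sub hconst).norm_left.tendsto_div_nhds_zero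
    |>.congr fun t => ?_
  rw [exp_smul_sub_eq_of_isIdempotentElem hp hpN hNp, norm_smul,
    Real.norm_of_nonneg (Real.exp_pos _).le, ← mul_assoc, ← Real.exp_add, div_eq_inv_mul,
    ← Real.exp_neg]
  ring_nf

end BanachAlgebra

theorem tendsto_exp_mul_norm_of_tendsto_exp_smul {E : Type*} [NormedAddCommGroup E]
    [NormedSpace ℝ E] {x : ℝ → E} {v : E} {μ κ : ℝ}
    (hx : Tendsto (fun t => Real.exp (μ * t) • x t) atTop (𝓝 v)) (hκ : κ < μ) :
    Tendsto (fun t => Real.exp (κ * t) * ‖x t‖) atTop (𝓝 0) := by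
  have hdecay : Tendsto (fun t => Real.exp ((κ - μ) * t)) atTop (𝓝 0) :=
    Real.tendsto_exp_atBot.comp (tendsto_id.const_mul_atTop_of_neg (sub_neg.2 hκ))
  refine (zero_mul ‖v‖ ▸ hdecay.mul hx.norm).congr fun t => ?_
  rw [norm_smul, Real.norm_of_nonneg (Real.exp_pos _).le, ← mul_assoc, ← Real.exp_add]
  ring_nf

theorem eq_exp_smul_apply_of_hasDerivAt {E : Type*} [NormedAddCommGroup E] [NormedSpace ℝ E]
    [CompleteSpace E] {A : E →L[ℝ] E} {b e : E} (he : A e + b = 0) {x : ℝ → E}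
    (hx : ∀ t, HasDerivAt x (A (x t) + b) t) (t : ℝ) :
    x t = e + exp (t • A) (x 0 - e) := by
  have hsol (t : ℝ) : HasDerivAt (fun t => e + exp (t • A) (x 0 - e))
      (A (e + exp (t • A) (x 0 - e)) + b) t := by
    convert ((hasDerivAt_exp_smul_const' A t).clm_apply (hasDerivAt_const t (x 0 - e))).const_add e
      using 1
    rw [map_add, add_right_comm, he]
    simp
  refine congrFun (ODE_solution_unique_univ (v := fun _ y => A y + b) (s := fun _ => Set.univ)
    (fun _ => (A.lipschitz.add (LipschitzWith.const b)).lipschitzOnWith) (fun t => ⟨hx t, trivial⟩)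
    (fun t => ⟨hsol t, trivial⟩) (t₀ := 0) (by simp)) t

open Matrix WithLp
-- In this scope `‖M‖` is the operator norm of `toEuclideanCLM M`, so `matOpNorm M = ‖M‖` by `rfl`.
open scoped Matrix.Norms.L2Operator

theorem Matrix.toEuclideanCLM_exp {ι : Type*} [Fintype ι] [DecidableEq ι] (M : Matrix ι ι ℝ) :
    toEuclideanCLM (𝕜 := ℝ) (exp M) = exp (toEuclideanCLM (𝕜 := ℝ) M) := by
  let +nondep : NormedAlgebra ℚ (Matrix ι ι ℝ) := .restrictScalars ℚ ℝ _
  exact map_exp _ (AddMonoidHomClass.isometry_of_norm _ fun _ => rfl).continuous M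

theorem Matrix.eq_exp_smul_mulVec_of_hasDerivAt {ι : Type*} [Fintype ι] [DecidableEq ι]
    {A : Matrix ι ι ℝ} {b e : ι → ℝ} (he : A *ᵥ e + b = 0) {x : ℝ → ι → ℝ}
    (hx : ∀ t, HasDerivAt x (A *ᵥ x t + b) t) (t : ℝ) :
    x t = e + exp (t • A) *ᵥ (x 0 - e) := by
  have hE := eq_exp_smul_apply_of_hasDerivAt (A := toEuclideanCLM (𝕜 := ℝ) A) (b := toLp 2 b)
    (e := toLp 2 e) (x := fun t => toLp 2 (x t)) (by simpa using congrArg (toLp 2) he)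
    (fun t => (PiLp.continuousLinearEquiv 2 ℝ fun _ : ι => ℝ).symm.hasFDerivAt.comp_hasDerivAt t
      (hx t)) t
  rw [← map_smul, ← toEuclideanCLM_exp, ← toLp_sub, toEuclideanCLM_toLp, ← toLp_add] at hE
  exact toLp_injective 2 hE

theorem Matrix.isNilpotent_of_isLowerTriangular {ι R : Type*} [Fintype ι] [LinearOrder ι]
    [CommRing R] {M : Matrix ι ι R} (h : M.IsLowerTriangular) (hdiag : ∀ i, M i i = 0) :
    IsNilpotent M := by
  have hchar : M.charpoly = Polynomial.X ^ Fintype.card ι := by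
    rw [← M.charpoly_transpose, charpoly_of_isUpperTriangular Mᵀ fun i j hij => h hij]
    simp [hdiag]
  exact ⟨_, by simpa [hchar] using M.aeval_self_charpoly⟩

theorem Matrix.isIdempotentElem_vecMulVec {ι R : Type*} [Fintype ι] [CommSemiring R]
    {v w : ι → R} (h : w ⬝ᵥ v = 1) : IsIdempotentElem (vecMulVec v w) := by
  rw [IsIdempotentElem, vecMulVec_mul_vecMulVec, h, one_smul]

theorem vecNorm_eq_norm_toLp {m : ℕ} (v : Fin m → ℝ) : vecNorm v = ‖toLp 2 v‖ := by
  simp [vecNorm, EuclideanSpace.norm_eq]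

theorem vecNorm_mulVec_le {m : ℕ} (M : Matrix (Fin m) (Fin m) ℝ) (v : Fin m → ℝ) :
    vecNorm (M *ᵥ v) ≤ ‖M‖ * vecNorm v := by
  rw [vecNorm_eq_norm_toLp, vecNorm_eq_norm_toLp, ← toEuclideanCLM_toLp]
  exact (toEuclideanCLM (𝕜 := ℝ) M).le_opNorm (toLp 2 v)

theorem tendsto_of_tendsto_vecNorm_sub {α : Type*} {l : Filter α} {m : ℕ} {f : α → Fin m → ℝ}
    {v : Fin m → ℝ} (h : Tendsto (fun a => vecNorm (f a - v)) l (𝓝 0)) :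
    Tendsto f l (𝓝 v) := by
  have hLp : Tendsto (fun a => toLp 2 (f a)) l (𝓝 (toLp 2 v)) :=
    tendsto_iff_norm_sub_tendsto_zero.2 (by simpa [vecNorm_eq_norm_toLp] using h)
  exact (PiLp.continuous_ofLp 2 _).tendsto _ |>.comp hLp

def waningJacobian (n : ℕ) (δ μ : ℝ) : Matrix (Fin (n + 1)) (Fin (n + 1)) ℝ :=
  of fun i j => if (i : ℕ) = j then (if (i : ℕ) = n then -μ else -δ - μ)
    else if (i : ℕ) = j + 1 then δ else 0

section WaningJacobian

variable {n : ℕ} {δ μ : ℝ}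

theorem waningJacobian_apply_last (i : Fin (n + 1)) :
    waningJacobian n δ μ i (Fin.last n) = if i = Fin.last n then -μ else 0 := by
  have := i.isLt
  simp only [waningJacobian, of_apply, Fin.ext_iff, Fin.val_last]
  split_ifs <;> first | rfl | omega

theorem waningJacobian_mulVec_single_last :
    waningJacobian n δ μ *ᵥ Pi.single (Fin.last n) 1 = -μ • Pi.single (Fin.last n) 1 := by
  ext i
  simp [waningJacobian_apply_last, Pi.single_apply]

theorem sum_waningJacobian_apply (j : Fin (n + 1)) : ∑ i, waningJacobian n δ μ i j = -μ := by
  rcases Fin.eq_castSucc_or_eq_last j with ⟨j, rfl⟩ | rfl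
  · rw [Fintype.sum_eq_add j.castSucc j.succ Fin.castSucc_lt_succ.ne fun i hi => ?_]
    · have := j.isLt
      simp only [waningJacobian, of_apply, Fin.val_castSucc, Fin.val_succ]
      split_ifs <;> first | ring1 | omega
    · have := i.isLt
      simp only [ne_eq, Fin.ext_iff, Fin.val_castSucc, Fin.val_succ] at hi
      simp only [waningJacobian, of_apply, Fin.val_castSucc]
      split_ifs <;> first | rfl | omega
  · simp [waningJacobian_apply_last]

theorem one_vecMul_waningJacobian : 1 ᵥ* waningJacobian n δ μ = -μ • 1 := by
  ext j
  simp [vecMul, dotProduct, sum_waningJacobian_apply]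

theorem isNilpotent_waningJacobian_add_smul_one_sub :
    IsNilpotent (waningJacobian n δ μ + (δ + μ) • 1 -
      δ • vecMulVec (Pi.single (Fin.last n) 1) 1) := by
  refine isNilpotent_of_isLowerTriangular (fun i j hij => ?_) fun i => ?_
  · have := j.isLt
    have hij : (i : ℕ) < j := hij
    simp only [waningJacobian, Matrix.sub_apply, Matrix.add_apply, Matrix.smul_apply, of_apply,
      one_apply, vecMulVec_apply, Pi.one_apply, Pi.single_apply, Fin.ext_iff, Fin.val_last,
      smul_eq_mul]
    split_ifs <;> first | ring1 | omega
  · simp only [waningJacobian, Matrix.sub_apply, Matrix.add_apply, Matrix.smul_apply, of_apply,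
      one_apply, vecMulVec_apply, Pi.one_apply, Pi.single_apply, Fin.ext_iff, Fin.val_last,
      smul_eq_mul]
    split_ifs <;> ring1

theorem waningJacobian_eq_add_nilpotent :
    ∃ N, IsNilpotent N ∧ vecMulVec (Pi.single (Fin.last n) 1) 1 * N = 0 ∧
      N * vecMulVec (Pi.single (Fin.last n) 1) 1 = 0 ∧
      waningJacobian n δ μ = (-δ - μ) • 1 + δ • vecMulVec (Pi.single (Fin.last n) 1) 1 + N := by
  set P : Matrix (Fin (n + 1)) (Fin (n + 1)) ℝ := vecMulVec (Pi.single (Fin.last n) 1) 1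
  have hP : IsIdempotentElem P := isIdempotentElem_vecMulVec (by simp)
  have hPJ : P * waningJacobian n δ μ = -μ • P := by
    rw [vecMulVec_mul, one_vecMul_waningJacobian, vecMulVec_smul]
  have hJP : waningJacobian n δ μ * P = -μ • P := by
    rw [mul_vecMulVec, waningJacobian_mulVec_single_last, smul_vecMulVec]
  refine ⟨_, isNilpotent_waningJacobian_add_smul_one_sub, ?_, ?_, by module⟩
  · rw [mul_sub, mul_add, hPJ, mul_smul_comm, mul_one, mul_smul_comm, hP.eq]
    module
  · rw [sub_mul, add_mul, hJP, smul_mul_assoc, one_mul, smul_mul_assoc, hP.eq]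
    module

end WaningJacobian

theorem stmt_17_general (n : ℕ) (δ μ : ℝ) (hδ : 0 < δ) (hμ : 0 < μ)
    (J : Matrix (Fin (n + 1)) (Fin (n + 1)) ℝ)
    (hJ : ∀ i j : Fin (n + 1), J i j =
      if (i : ℕ) = (j : ℕ) then (if (i : ℕ) = n then -μ else -δ - μ)
      else if (i : ℕ) = (j : ℕ) + 1 then δ
      else 0)
    (P : Matrix (Fin (n + 1)) (Fin (n + 1)) ℝ)
    (hP : ∀ i j : Fin (n + 1), P i j = if (i : ℕ) = n then 1 else 0)
    (S : ℝ → Fin (n + 1) → ℝ)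
    (hODE : ∀ (t : ℝ) (i : Fin (n + 1)),
      HasDerivAt (fun s => S s i)
        ((J.mulVec (S t) + μ • (Pi.single (Fin.last n) 1 : Fin (n + 1) → ℝ)) i) t) :
    (∀ κ < δ, Tendsto
        (fun t : ℝ => Real.exp (κ * t) *
          matOpNorm (Real.exp (μ * t) • NormedSpace.exp (t • J) - P))
        atTop (nhds 0)) ∧
      (Tendsto (fun t : ℝ => S t) atTop
        (nhds (Pi.single (Fin.last n) 1 : Fin (n + 1) → ℝ))) ∧
      (∀ κ < μ, Tendsto
        (fun t : ℝ => Real.exp (κ * t) *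
          vecNorm (S t - (Pi.single (Fin.last n) 1 : Fin (n + 1) → ℝ)))
        atTop (nhds 0)) := by
  obtain rfl : J = waningJacobian n δ μ := Matrix.ext hJ
  obtain rfl : P = vecMulVec (Pi.single (Fin.last n) 1) 1 := Matrix.ext fun i j => by
    simp [hP, vecMulVec_apply, Pi.single_apply, Fin.ext_iff]
  obtain ⟨N, hN, hPN, hNP, hJN⟩ := waningJacobian_eq_add_nilpotent (n := n) (δ := δ) (μ := μ)
  have hdecay : ∀ κ < δ, Tendsto (fun t : ℝ => Real.exp (κ * t) *
      ‖Real.exp (μ * t) • exp (t • waningJacobian n δ μ) - vecMulVec (Pi.single (Fin.last n) 1) 1‖)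
      atTop (𝓝 0) := fun κ hκ =>
    hJN ▸ tendsto_exp_mul_norm_exp_smul_sub (isIdempotentElem_vecMulVec (by simp)) hPN hNP hN hκ
  have hexp : ∀ κ < μ, Tendsto (fun t : ℝ => Real.exp (κ * t) * ‖exp (t • waningJacobian n δ μ)‖)
      atTop (𝓝 0) := fun κ hκ =>
    tendsto_exp_mul_norm_of_tendsto_exp_smul
      (tendsto_iff_norm_sub_tendsto_zero.2 (by simpa using hdecay 0 hδ)) hκ
  have hsol := eq_exp_smul_mulVec_of_hasDerivAt
    (by rw [waningJacobian_mulVec_single_last, neg_smul, neg_add_cancel])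
    fun t => hasDerivAt_pi.2 (hODE t)
  have hconv : ∀ κ < μ, Tendsto (fun t : ℝ => Real.exp (κ * t) *
      vecNorm (S t - Pi.single (Fin.last n) 1)) atTop (𝓝 0) := fun κ hκ => by
    refine squeeze_zero (fun t => ?_) (fun t => ?_)
      (zero_mul (vecNorm (S 0 - Pi.single (Fin.last n) 1)) ▸ (hexp κ hκ).mul_const _)
    · exact mul_nonneg (Real.exp_pos _).le (Real.sqrt_nonneg _)
    · rw [hsol t, add_sub_cancel_left, mul_assoc]
      exact mul_le_mul_of_nonneg_left (vecNorm_mulVec_le _ _) (Real.exp_pos _).le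
  exact ⟨hdecay, tendsto_of_tendsto_vecNorm_sub (by simpa using hconv 0 hμ), hconv⟩

theorem stmt_17 (n : ℕ) (δ μ : ℝ) (hδ : 0 < δ) (hμ : 0 < μ)
    (J : Matrix (Fin (n + 1)) (Fin (n + 1)) ℝ)
    (hJ : ∀ i j : Fin (n + 1), J i j =
      if (i : ℕ) = (j : ℕ) then (if (i : ℕ) = n then -μ else -δ - μ)
      else if (i : ℕ) = (j : ℕ) + 1 then δ
      else 0)
    (P : Matrix (Fin (n + 1)) (Fin (n + 1)) ℝ)
    (hP : ∀ i j : Fin (n + 1), P i j = if (i : ℕ) = n then 1 else 0)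
    (S : ℝ → Fin (n + 1) → ℝ)
    (hS0 : ∀ i, 0 ≤ S 0 i) (hSsum : ∑ i, S 0 i = 1)
    (hODE : ∀ (t : ℝ) (i : Fin (n + 1)),
      HasDerivAt (fun s => S s i)
        ((J.mulVec (S t) + μ • (Pi.single (Fin.last n) 1 : Fin (n + 1) → ℝ)) i) t) :
    (∀ κ < δ, Tendsto
        (fun t : ℝ => Real.exp (κ * t) *
          matOpNorm (Real.exp (μ * t) • NormedSpace.exp (t • J) - P))
        atTop (nhds 0)) ∧
      (Tendsto (fun t : ℝ => S t) atTop
        (nhds (Pi.single (Fin.last n) 1 : Fin (n + 1) → ℝ))) ∧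
      (∀ κ < μ, Tendsto
        (fun t : ℝ => Real.exp (κ * t) *
          vecNorm (S t - (Pi.single (Fin.last n) 1 : Fin (n + 1) → ℝ)))
        atTop (nhds 0)) :=
  stmt_17_general n δ μ hδ hμ J hJ P hP S hODE
end

section
/- Let n ≥ 0 and let A₀ be the (n+1)×(n+1) matrix (indexed from 0) with diagonal entries A₀_{kk} = −(β_k I + μ + ω_k), first-row off-diagonal entries A₀_{0,k} = ω_k for k ≥ 1, and all other entries zero, where μ > 0, I ≥ 0, ω_0 = 0, ω_k ≥ 0, and 0 < β_0 ≤ β_k for all k. Then A₀ is invertible, its inverse has entries (A₀⁻¹)_{kk} = 1/A₀_{kk}, (A₀⁻¹)_{0,k} = −ω_k/(A₀_{00}·A₀_{kk}) for k ≥ 1, and zeros elsewhere, and the operator norm satisfies ‖A₀⁻¹‖ ≤ sqrt(n+1)/(β_0 I + μ). -/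
open Matrix

namespace Matrix

variable {ι K : Type*} [DecidableEq ι]

def diagWithRow [Zero K] (r : ι) (d w : ι → K) : Matrix ι ι K :=
  of fun k l => if k = l then d k else if k = r then w l else 0

@[simp]
theorem diagWithRow_apply [Zero K] (r : ι) (d w : ι → K) (k l : ι) :
    diagWithRow r d w k l = if k = l then d k else if k = r then w l else 0 := rfl

variable [Fintype ι]

theorem diagWithRow_mul_diagWithRow [Field K] {r : ι} {d : ι → K} (hd : ∀ k, d k ≠ 0)
    (w : ι → K) :
    diagWithRow r d w * diagWithRow r (fun k => 1 / d k) (fun l => -w l / (d r * d l)) = 1 := by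
  ext k l
  rw [mul_apply, Fintype.sum_eq_add_sum_compl k, one_apply]
  by_cases hkr : k = r
  · subst hkr
    by_cases hkl : k = l
    · subst hkl
      simp +contextual [hd]
    · simp +contextual [hkl, Finset.sum_ite, Finset.filter_eq', Finset.filter_ne', Ne.symm hkl]
      field_simp [hd]
      ring
  · simp +contextual [hkr, hd]
    exact Ne.symm

theorem inv_diagWithRow [Field K] {r : ι} {d : ι → K} (hd : ∀ k, d k ≠ 0) (w : ι → K) :
    (diagWithRow r d w)⁻¹ = diagWithRow r (fun k => 1 / d k) (fun l => -w l / (d r * d l)) :=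
  inv_eq_right_inv (diagWithRow_mul_diagWithRow hd w)

theorem sum_sq_diagWithRow_apply [CommRing K] (r : ι) (d w : ι → K) (l : ι) :
    ∑ k, diagWithRow r d w k l ^ 2 = d l ^ 2 + if l = r then 0 else w l ^ 2 := by
  rw [Fintype.sum_eq_add_sum_compl l]
  simp +contextual [Finset.sum_ite, Finset.filter_eq', Finset.filter_ne', @eq_comm _ r]

end Matrix

section
attribute [local instance] Matrix.frobeniusNormedAddCommGroup

-- `M *ᵥ x` is the single column of `M * replicateCol Unit x`, and the Frobenius norm is
-- submultiplicative.
theorem matOpNorm_le_sqrt_sum_sq {m n : ℕ} (M : Matrix (Fin m) (Fin n) ℝ) :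
    matOpNorm M ≤ Real.sqrt (∑ i, ∑ j, M i j ^ 2) := by
  have hM : ‖M‖ = Real.sqrt (∑ i, ∑ j, M i j ^ 2) := by
    simp [frobenius_norm_def, Real.sqrt_eq_rpow]
  refine hM ▸ ContinuousLinearMap.opNorm_le_bound _ (norm_nonneg M) fun x => ?_
  have := frobenius_norm_mul M (replicateCol Unit x.ofLp)
  rwa [← replicateCol_mulVec, frobenius_norm_replicateCol, frobenius_norm_replicateCol] at this

end

theorem one_div_sq_add_div_mul_sq_le {a x y w : ℝ} (ha : 0 < a) (hx : a ≤ |x|)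
    (hy : a + |w| ≤ |y|) : (1 / y) ^ 2 + (-w / (x * y)) ^ 2 ≤ (1 / a) ^ 2 := by
  have hy0 : 0 < |y| := by linarith [abs_nonneg w]
  calc (1 / y) ^ 2 + (-w / (x * y)) ^ 2 = (1 / |y|) ^ 2 + (|w| / (|x| * |y|)) ^ 2 := by
        simp only [div_pow, mul_pow, sq_abs, neg_sq]
    _ ≤ (1 / |y|) ^ 2 + (|w| / (a * |y|)) ^ 2 := by gcongr
    _ = (a ^ 2 + |w| ^ 2) / (a ^ 2 * |y| ^ 2) := by field_simp
    _ ≤ |y| ^ 2 / (a ^ 2 * |y| ^ 2) := by gcongr; nlinarith [abs_nonneg w]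
    _ = (1 / a) ^ 2 := by field_simp

theorem matOpNorm_inv_diagWithRow_le {m : ℕ} {r : Fin m} {d w : Fin m → ℝ} {a : ℝ}
    (ha : 0 < a) (hr : a ≤ |d r|) (hl : ∀ l ≠ r, a + |w l| ≤ |d l|) :
    matOpNorm (diagWithRow r d w)⁻¹ ≤ Real.sqrt m / a := by
  have hd : ∀ k, d k ≠ 0 := by
    intro k
    rw [← abs_pos]
    by_cases hk : k = r
    · exact hk ▸ ha.trans_le hr
    · linarith [hl k hk, abs_nonneg (w k)]
  have hcol : ∀ l, ∑ k, diagWithRow r (fun k => 1 / d k) (fun l => -w l / (d r * d l)) k l ^ 2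
      ≤ (1 / a) ^ 2 := by
    intro l
    rw [sum_sq_diagWithRow_apply]
    split_ifs with hlr
    · subst hlr
      simpa using one_div_sq_add_div_mul_sq_le (w := 0) ha hr (by simpa using hr)
    · exact one_div_sq_add_div_mul_sq_le ha hr (hl l hlr)
  rw [inv_diagWithRow hd]
  calc _ ≤ _ := matOpNorm_le_sqrt_sum_sq _
    _ ≤ Real.sqrt (∑ _l : Fin m, (1 / a) ^ 2) := by
        rw [Finset.sum_comm]
        exact Real.sqrt_le_sqrt (Finset.sum_le_sum fun l _ => hcol l)
    _ = Real.sqrt m / a := by simp [Real.sqrt_mul, ha.le, div_eq_mul_inv]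

theorem stmt_19 (n : ℕ) (μ I : ℝ) (β ω : ℕ → ℝ)
    (hμ : 0 < μ) (hI : 0 ≤ I) (hω0 : ω 0 = 0) (hω : ∀ k, 0 ≤ ω k)
    (hβ0 : 0 < β 0) (hβ : ∀ k, β 0 ≤ β k)
    (A₀ : Matrix (Fin (n + 1)) (Fin (n + 1)) ℝ)
    (hA₀ : ∀ k l : Fin (n + 1), A₀ k l =
      if k = l then -(β k * I + μ + ω k)
      else if (k : ℕ) = 0 ∧ 1 ≤ (l : ℕ) then ω l
      else 0) :
    IsUnit A₀.det ∧
      (∀ k l : Fin (n + 1), A₀⁻¹ k l =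
        if k = l then 1 / A₀ k k
        else if (k : ℕ) = 0 ∧ 1 ≤ (l : ℕ) then -(ω l) / (A₀ 0 0 * A₀ l l)
        else 0) ∧
      matOpNorm A₀⁻¹ ≤ Real.sqrt (n + 1) / (β 0 * I + μ) := by
  set d : Fin (n + 1) → ℝ := fun k => -(β k * I + μ + ω k)
  have hfirst : ∀ k l : Fin (n + 1), k ≠ l → ((k : ℕ) = 0 ∧ 1 ≤ (l : ℕ) ↔ k = 0) := by
    intro k l hkl
    simp only [Fin.ext_iff, Fin.val_zero] at hkl ⊢
    omega
  have hA : A₀ = diagWithRow 0 d (fun l => ω l) := by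
    ext k l
    rw [hA₀, diagWithRow_apply]
    by_cases hkl : k = l
    · simp [hkl, d]
    · simp only [hkl, hfirst k l hkl, if_false]
  have ha : 0 < β 0 * I + μ := add_pos_of_nonneg_of_pos (mul_nonneg hβ0.le hI) hμ
  have hd : ∀ k : Fin (n + 1), β 0 * I + μ + |ω k| ≤ |d k| := by
    intro k
    have := mul_le_mul_of_nonneg_right (hβ k) hI
    rw [abs_neg, abs_of_nonneg (hω k), abs_of_nonneg (by linarith [hω k])]
    linarith
  have hd0 : ∀ k : Fin (n + 1), d k ≠ 0 :=
    fun k => abs_pos.1 (by linarith [hd k, abs_nonneg (ω k)])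
  subst hA
  refine ⟨isUnit_det_of_right_inverse (diagWithRow_mul_diagWithRow hd0 _), fun k l => ?_, ?_⟩
  · rw [inv_diagWithRow hd0]
    simp only [diagWithRow_apply]
    split_ifs <;> simp_all
  · simpa using matOpNorm_inv_diagWithRow_le ha (by simpa [hω0] using hd 0) fun l _ => hd l
end
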